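/- Let λ = 1/√n, assume ‖P_Ω P_T‖ ≤ 1/2 and n ≥ 4, and suppose there exists a dual certificate W (P_T W = 0, ‖W‖ < 1/2, ‖P_Ω(UV* − λ·sgn(S₀) + W)‖_F ≤ λ/4, ‖P_{Ω⊥}(UV* + W)‖_∞ < λ/2). Let H = (H_L, H_S) be a pair with ‖X₀ + H‖_♦ ≤ ‖X₀‖_♦ (where X₀ = (L₀,S₀)) and ‖H_L + H_S‖_F ≤ 2δ. Write H^Γ = P_Γ(H) and H^{Γ⊥} = H − H^Γ. Then ‖(P_{T⊥} × P_{Ω⊥})(H^{Γ⊥})‖_F ≤ ‖P_{T⊥}(H^{Γ⊥}_L)‖_F + ‖P_{Ω⊥}(H^{Γ⊥}_S)‖_F ≤ 4√2·n·‖H^Γ‖_F ≤ 8nδ. -/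

import Mathlib

/-!
Put `M = (H_L + H_S)/2` and `Q = (H_L - H_S)/2`, so that `H^Γ = (M, M)`, `H^{Γ⊥} = (Q, -Q)`,
`H_L = M + Q` and `H_S = M - Q`. The subgradient inequalities of the nuclear norm at `L₀`
(subgradient `UVᵀ + Z`, with `Z` the polar factor of `P_{T⊥} H_L`) and of the `ℓ₁` norm at `S₀`
turn `‖X₀ + H‖_♦ ≤ ‖X₀‖_♦` into
  `‖P_{T⊥} Q‖_* + λ ‖P_{Ω⊥} Q‖_1 + ⟨UVᵀ - λ sgn S₀, Q⟩ ≤ 2√n ‖M‖_F`,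
the terms in `M` being absorbed by `‖M‖_* ≤ √n ‖M‖_F` and `λ ‖M‖_1 ≤ λ n ‖M‖_F = √n ‖M‖_F`.
Now `UVᵀ - λ sgn S₀ = D - W` with `D = P_Ω D + P_{Ω⊥}(UVᵀ + W)`, so the certificate gives
`|⟨D, Q⟩| ≤ λ/4 ‖P_Ω Q‖_F + λ/2 ‖P_{Ω⊥} Q‖_1` and `⟨W, Q⟩ ≤ ½ ‖P_{T⊥} Q‖_*`, while
`‖P_Ω P_T‖ ≤ ½` gives `‖P_Ω Q‖_F ≤ 2 ‖P_{T⊥} Q‖_F + ‖P_{Ω⊥} Q‖_F`. As `λ ≤ ½`, these combine to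
`λ (‖P_{T⊥} Q‖_F + ‖P_{Ω⊥} Q‖_F) ≤ 8√n ‖M‖_F`, that is, the bound `8n ‖M‖_F = 4√2 n ‖H^Γ‖_F`.

The nuclear-norm facts come from an orthonormal eigenbasis `(v_j)` of `BᵀB`: with
`σ_j = ‖B v_j‖` one has `‖B‖_* = ∑ σ_j` and `⟨W, B⟩ = ∑ ⟪W v_j, B v_j⟫`, which gives
`|⟨W, B⟩| ≤ ‖W‖ ‖B‖_*`, and the polar factor `∑ σ_j⁻¹ (B v_j) v_jᵀ` has spectral norm at most one
and pairs with `B` to `‖B‖_*`.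
-/

open Matrix BigOperators

noncomputable def frobNorm {m k : ℕ} (A : Matrix (Fin m) (Fin k) ℝ) : ℝ :=
  Real.sqrt (∑ i, ∑ j, (A i j) ^ 2)

theorem Matrix.isHermitian_transpose_mul_self {m k : ℕ} (A : Matrix (Fin m) (Fin k) ℝ) :
    (Aᵀ * A).IsHermitian := by
  have h := Matrix.isHermitian_conjTranspose_mul_self A
  rwa [Matrix.conjTranspose_eq_transpose_of_trivial] at h

noncomputable def nuclearNorm {m k : ℕ} (A : Matrix (Fin m) (Fin k) ℝ) : ℝ :=
  ∑ i, Real.sqrt ((Matrix.isHermitian_transpose_mul_self A).eigenvalues i)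

def l1Norm {m k : ℕ} (A : Matrix (Fin m) (Fin k) ℝ) : ℝ :=
  ∑ i, ∑ j, |A i j|

noncomputable def linfNorm {m k : ℕ} (A : Matrix (Fin m) (Fin k) ℝ) : ℝ :=
  ⨆ i, ⨆ j, |A i j|

noncomputable def specNorm {m k : ℕ} (A : Matrix (Fin m) (Fin k) ℝ) : ℝ :=
  ‖LinearMap.toContinuousLinearMap (Matrix.toEuclideanLin A)‖

def finner {m k : ℕ} (A B : Matrix (Fin m) (Fin k) ℝ) : ℝ :=
  ∑ i, ∑ j, A i j * B i j

noncomputable def projSet {n : ℕ} (Ω : Set (Fin n × Fin n)) (S : Matrix (Fin n) (Fin n) ℝ) :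
    Matrix (Fin n) (Fin n) ℝ :=
  fun i j => Ω.indicator (fun p => S p.1 p.2) (i, j)

def suppSet {n : ℕ} (S : Matrix (Fin n) (Fin n) ℝ) : Set (Fin n × Fin n) :=
  {p | S p.1 p.2 ≠ 0}

noncomputable def sgnMat {n : ℕ} (S : Matrix (Fin n) (Fin n) ℝ) : Matrix (Fin n) (Fin n) ℝ :=
  fun i j => Real.sign (S i j)

def Tspace {n r : ℕ} (U V : Matrix (Fin n) (Fin r) ℝ) : Set (Matrix (Fin n) (Fin n) ℝ) :=
  {X | ∃ Q R : Matrix (Fin n) (Fin r) ℝ, X = U * Qᵀ + R * Vᵀ}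

def IsOrthProjOnto {n : ℕ} (P : Matrix (Fin n) (Fin n) ℝ →ₗ[ℝ] Matrix (Fin n) (Fin n) ℝ)
    (T : Set (Matrix (Fin n) (Fin n) ℝ)) : Prop :=
  (∀ X, P X ∈ T) ∧ (∀ X ∈ T, P X = X) ∧ (∀ X Y, Y ∈ T → finner (X - P X) Y = 0)

noncomputable def pairFrob {n : ℕ} (X : Matrix (Fin n) (Fin n) ℝ × Matrix (Fin n) (Fin n) ℝ) : ℝ :=
  Real.sqrt (frobNorm X.1 ^ 2 + frobNorm X.2 ^ 2)

noncomputable def projGamma {n : ℕ} (X : Matrix (Fin n) (Fin n) ℝ × Matrix (Fin n) (Fin n) ℝ) :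
    Matrix (Fin n) (Fin n) ℝ × Matrix (Fin n) (Fin n) ℝ :=
  ((1/2 : ℝ) • (X.1 + X.2), (1/2 : ℝ) • (X.1 + X.2))

open scoped Classical

noncomputable def suppFinset {n : ℕ} (S : Matrix (Fin n) (Fin n) ℝ) : Finset (Fin n × Fin n) :=
  Finset.univ.filter (fun p => S p.1 p.2 ≠ 0)

open scoped InnerProductSpace

section Frobenius

variable {m k : ℕ}

def frobVec : Matrix (Fin m) (Fin k) ℝ →ₗ[ℝ] EuclideanSpace ℝ (Fin m × Fin k) where
  toFun A := WithLp.toLp 2 fun p => A p.1 p.2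
  map_add' _ _ := rfl
  map_smul' _ _ := rfl

@[simp] lemma frobVec_apply (A : Matrix (Fin m) (Fin k) ℝ) (p : Fin m × Fin k) :
    frobVec A p = A p.1 p.2 := rfl

lemma frobVec_injective : Function.Injective (frobVec (m := m) (k := k)) := by
  intro A B h
  ext i j
  exact congrArg (fun v : EuclideanSpace ℝ (Fin m × Fin k) => v (i, j)) h

lemma frobNorm_eq_norm (A : Matrix (Fin m) (Fin k) ℝ) : frobNorm A = ‖frobVec A‖ := by
  simp [frobNorm, EuclideanSpace.norm_eq, Fintype.sum_prod_type]

lemma finner_eq_inner (A B : Matrix (Fin m) (Fin k) ℝ) :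
    finner A B = inner ℝ (frobVec A) (frobVec B) := by
  simp [finner, PiLp.inner_apply, Fintype.sum_prod_type, mul_comm]

lemma frobNorm_nonneg (A : Matrix (Fin m) (Fin k) ℝ) : 0 ≤ frobNorm A := Real.sqrt_nonneg _

lemma frobNorm_add_le (A B : Matrix (Fin m) (Fin k) ℝ) :
    frobNorm (A + B) ≤ frobNorm A + frobNorm B := by
  simpa only [frobNorm_eq_norm, map_add] using norm_add_le _ _

lemma frobNorm_neg (A : Matrix (Fin m) (Fin k) ℝ) : frobNorm (-A) = frobNorm A := by
  simp only [frobNorm_eq_norm, map_neg, norm_neg]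

lemma frobNorm_smul (c : ℝ) (A : Matrix (Fin m) (Fin k) ℝ) :
    frobNorm (c • A) = |c| * frobNorm A := by
  simp only [frobNorm_eq_norm, map_smul, norm_smul, Real.norm_eq_abs]

lemma frobNorm_sq (A : Matrix (Fin m) (Fin k) ℝ) : frobNorm A ^ 2 = finner A A := by
  rw [frobNorm_eq_norm, finner_eq_inner, real_inner_self_eq_norm_sq]

lemma abs_finner_le (A B : Matrix (Fin m) (Fin k) ℝ) :
    |finner A B| ≤ frobNorm A * frobNorm B := by
  simpa only [finner_eq_inner, frobNorm_eq_norm] using abs_real_inner_le_norm _ _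

lemma finner_add_left (A B C : Matrix (Fin m) (Fin k) ℝ) :
    finner (A + B) C = finner A C + finner B C := by
  simp only [finner_eq_inner, map_add, inner_add_left]

lemma finner_add_right (A B C : Matrix (Fin m) (Fin k) ℝ) :
    finner A (B + C) = finner A B + finner A C := by
  simp only [finner_eq_inner, map_add, inner_add_right]

lemma finner_sub_left (A B C : Matrix (Fin m) (Fin k) ℝ) :
    finner (A - B) C = finner A C - finner B C := by
  simp only [finner_eq_inner, map_sub, inner_sub_left]

lemma finner_sub_right (A B C : Matrix (Fin m) (Fin k) ℝ) :
    finner A (B - C) = finner A B - finner A C := by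
  simp only [finner_eq_inner, map_sub, inner_sub_right]

lemma finner_neg_left (A B : Matrix (Fin m) (Fin k) ℝ) : finner (-A) B = -finner A B := by
  simp only [finner_eq_inner, map_neg, inner_neg_left]

lemma finner_smul_left (c : ℝ) (A B : Matrix (Fin m) (Fin k) ℝ) :
    finner (c • A) B = c * finner A B := by
  simp only [finner_eq_inner, map_smul, real_inner_smul_left]

lemma finner_zero_left (A : Matrix (Fin m) (Fin k) ℝ) : finner 0 A = 0 := by
  simp [finner]

lemma finner_sum_left {ι : Type*} (s : Finset ι) (A : ι → Matrix (Fin m) (Fin k) ℝ)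
    (C : Matrix (Fin m) (Fin k) ℝ) : finner (∑ i ∈ s, A i) C = ∑ i ∈ s, finner (A i) C := by
  simp only [finner_eq_inner, map_sum, sum_inner]

lemma eq_zero_of_finner_self_eq_zero {A : Matrix (Fin m) (Fin k) ℝ} (h : finner A A = 0) :
    A = 0 :=
  frobVec_injective (by rwa [finner_eq_inner, inner_self_eq_zero] at h)

lemma finner_eq_trace (A B : Matrix (Fin m) (Fin k) ℝ) : finner A B = trace (Aᵀ * B) := by
  simp only [finner, trace, diag, mul_apply, transpose_apply]
  exact Finset.sum_comm

lemma finner_mul_left {p : ℕ} (A : Matrix (Fin m) (Fin k) ℝ) (C : Matrix (Fin m) (Fin p) ℝ)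
    (B : Matrix (Fin p) (Fin k) ℝ) : finner A (C * B) = finner (Cᵀ * A) B := by
  simp only [finner_eq_trace, transpose_mul, transpose_transpose, Matrix.mul_assoc]

lemma finner_mul_right {p : ℕ} (A : Matrix (Fin m) (Fin k) ℝ) (B : Matrix (Fin m) (Fin p) ℝ)
    (C : Matrix (Fin p) (Fin k) ℝ) : finner A (B * C) = finner (A * Cᵀ) B := by
  rw [finner_eq_trace, finner_eq_trace, transpose_mul, transpose_transpose, ← Matrix.mul_assoc,
    trace_mul_comm, Matrix.mul_assoc]

lemma pairFrob_le_add {n : ℕ} (X Y : Matrix (Fin n) (Fin n) ℝ) :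
    pairFrob (X, Y) ≤ frobNorm X + frobNorm Y := by
  refine Real.sqrt_le_iff.2 ⟨add_nonneg (frobNorm_nonneg X) (frobNorm_nonneg Y), ?_⟩
  nlinarith [mul_nonneg (frobNorm_nonneg X) (frobNorm_nonneg Y)]

lemma pairFrob_diag {n : ℕ} (X : Matrix (Fin n) (Fin n) ℝ) :
    pairFrob (X, X) = √2 * frobNorm X := by
  rw [pairFrob, ← two_mul, Real.sqrt_mul zero_le_two, Real.sqrt_sq (frobNorm_nonneg X)]

end Frobenius

section EuclideanAction

variable {m k : ℕ}

lemma toEuclideanLin_mul_apply {p : ℕ} (A : Matrix (Fin m) (Fin p) ℝ) (B : Matrix (Fin p) (Fin k) ℝ)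
    (x : EuclideanSpace ℝ (Fin k)) :
    toEuclideanLin (A * B) x = toEuclideanLin A (toEuclideanLin B x) := by
  simp

lemma inner_toEuclideanLin_left (A : Matrix (Fin m) (Fin k) ℝ) (x : EuclideanSpace ℝ (Fin k))
    (y : EuclideanSpace ℝ (Fin m)) :
    ⟪toEuclideanLin A x, y⟫_ℝ = ⟪x, toEuclideanLin Aᵀ y⟫_ℝ := by
  rw [← conjTranspose_eq_transpose_of_trivial, toEuclideanLin_conjTranspose_eq_adjoint,
    LinearMap.adjoint_inner_right]

lemma norm_toEuclideanLin_le (A : Matrix (Fin m) (Fin k) ℝ) (x : EuclideanSpace ℝ (Fin k)) :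
    ‖toEuclideanLin A x‖ ≤ specNorm A * ‖x‖ :=
  (LinearMap.toContinuousLinearMap (toEuclideanLin A)).le_opNorm x

lemma specNorm_le_of_norm_le {A : Matrix (Fin m) (Fin k) ℝ} {c : ℝ} (hc : 0 ≤ c)
    (h : ∀ x, ‖toEuclideanLin A x‖ ≤ c * ‖x‖) : specNorm A ≤ c :=
  ContinuousLinearMap.opNorm_le_bound _ hc h

lemma norm_toEuclideanLin_of_transpose_mul_self_eq_one {A : Matrix (Fin m) (Fin k) ℝ}
    (hA : Aᵀ * A = 1) (x : EuclideanSpace ℝ (Fin k)) : ‖toEuclideanLin A x‖ = ‖x‖ := by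
  rw [← sq_eq_sq₀ (norm_nonneg _) (norm_nonneg _), ← real_inner_self_eq_norm_sq,
    ← real_inner_self_eq_norm_sq, inner_toEuclideanLin_left, ← toEuclideanLin_mul_apply, hA]
  simp

lemma toEuclideanLin_vecMulVec (x : EuclideanSpace ℝ (Fin m)) (y z : EuclideanSpace ℝ (Fin k)) :
    toEuclideanLin (vecMulVec ⇑x ⇑y) z = ⟪y, z⟫_ℝ • x := by
  ext i
  simp [toLpLin_apply, vecMulVec_mulVec, PiLp.inner_apply, dotProduct, mul_comm]

lemma finner_vecMulVec (C : Matrix (Fin m) (Fin k) ℝ) (x : EuclideanSpace ℝ (Fin m))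
    (y : EuclideanSpace ℝ (Fin k)) : finner (vecMulVec ⇑x ⇑y) C = ⟪x, toEuclideanLin C y⟫_ℝ := by
  simp [finner, vecMulVec_apply, PiLp.inner_apply, toLpLin_apply, mulVec, dotProduct,
    Finset.mul_sum, mul_comm, mul_left_comm]

lemma mul_vecMulVec_euclidean {p : ℕ} (M : Matrix (Fin p) (Fin m) ℝ) (x : EuclideanSpace ℝ (Fin m))
    (y : EuclideanSpace ℝ (Fin k)) : M * vecMulVec ⇑x ⇑y = vecMulVec ⇑(toEuclideanLin M x) ⇑y := by
  rw [mul_vecMulVec]; rfl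

lemma vecMulVec_mul_euclidean {p : ℕ} (x : EuclideanSpace ℝ (Fin m)) (y : EuclideanSpace ℝ (Fin k))
    (M : Matrix (Fin k) (Fin p) ℝ) :
    vecMulVec ⇑x ⇑y * M = vecMulVec ⇑x ⇑(toEuclideanLin Mᵀ y) := by
  rw [vecMulVec_mul]
  congr 1
  exact (mulVec_transpose M _).symm

lemma finner_eq_sum_inner (b : OrthonormalBasis (Fin k) ℝ (EuclideanSpace ℝ (Fin k)))
    (W B : Matrix (Fin m) (Fin k) ℝ) :
    finner W B = ∑ j, ⟪toEuclideanLin W (b j), toEuclideanLin B (b j)⟫_ℝ := by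
  have hrow : ∀ i, ∑ l, W i l * B i l
      = ∑ j, (toEuclideanLin W (b j)) i * (toEuclideanLin B (b j)) i := by
    intro i
    have := b.sum_inner_mul_inner (WithLp.toLp 2 (W i)) (WithLp.toLp 2 (B i))
    simp only [PiLp.inner_apply, RCLike.inner_apply, conj_trivial] at this
    simp only [toLpLin_apply, mulVec, dotProduct]
    simp only [mul_comm] at this ⊢
    exact this.symm
  simp only [finner, hrow, PiLp.inner_apply, RCLike.inner_apply, conj_trivial]
  rw [Finset.sum_comm]
  simp [mul_comm]

end EuclideanAction

section NuclearNorm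

variable {m k : ℕ}

noncomputable def rightSingularBasis (B : Matrix (Fin m) (Fin k) ℝ) :
    OrthonormalBasis (Fin k) ℝ (EuclideanSpace ℝ (Fin k)) :=
  (isHermitian_transpose_mul_self B).eigenvectorBasis

noncomputable def sqSingularValue (B : Matrix (Fin m) (Fin k) ℝ) (j : Fin k) : ℝ :=
  (isHermitian_transpose_mul_self B).eigenvalues j

lemma nuclearNorm_eq_sum (B : Matrix (Fin m) (Fin k) ℝ) :
    nuclearNorm B = ∑ j, √(sqSingularValue B j) := rfl

lemma toEuclideanLin_gram_rightSingularBasis (B : Matrix (Fin m) (Fin k) ℝ) (j : Fin k) :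
    toEuclideanLin (Bᵀ * B) (rightSingularBasis B j)
      = sqSingularValue B j • rightSingularBasis B j := by
  ext i
  simpa [toLpLin_apply, rightSingularBasis, sqSingularValue] using
    congrFun ((isHermitian_transpose_mul_self B).mulVec_eigenvectorBasis j) i

lemma inner_toEuclideanLin_rightSingularBasis (B : Matrix (Fin m) (Fin k) ℝ) (i j : Fin k) :
    ⟪toEuclideanLin B (rightSingularBasis B i), toEuclideanLin B (rightSingularBasis B j)⟫_ℝ
      = if i = j then sqSingularValue B i else 0 := by
  rw [inner_toEuclideanLin_left, ← toEuclideanLin_mul_apply,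
    toEuclideanLin_gram_rightSingularBasis, real_inner_smul_right,
    orthonormal_iff_ite.1 (rightSingularBasis B).orthonormal]
  split_ifs with h <;> simp [h]

lemma norm_sq_toEuclideanLin_rightSingularBasis (B : Matrix (Fin m) (Fin k) ℝ) (j : Fin k) :
    ‖toEuclideanLin B (rightSingularBasis B j)‖ ^ 2 = sqSingularValue B j := by
  rw [← real_inner_self_eq_norm_sq, inner_toEuclideanLin_rightSingularBasis, if_pos rfl]

lemma sqSingularValue_nonneg (B : Matrix (Fin m) (Fin k) ℝ) (j : Fin k) :
    0 ≤ sqSingularValue B j := by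
  rw [← norm_sq_toEuclideanLin_rightSingularBasis]
  positivity

lemma norm_toEuclideanLin_rightSingularBasis (B : Matrix (Fin m) (Fin k) ℝ) (j : Fin k) :
    ‖toEuclideanLin B (rightSingularBasis B j)‖ = √(sqSingularValue B j) := by
  rw [← norm_sq_toEuclideanLin_rightSingularBasis, Real.sqrt_sq (norm_nonneg _)]

lemma frobNorm_sq_eq_sum_sqSingularValue (B : Matrix (Fin m) (Fin k) ℝ) :
    frobNorm B ^ 2 = ∑ j, sqSingularValue B j := by
  simp only [frobNorm_sq, finner_eq_sum_inner (rightSingularBasis B), real_inner_self_eq_norm_sq,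
    norm_sq_toEuclideanLin_rightSingularBasis]

lemma nuclearNorm_nonneg (B : Matrix (Fin m) (Fin k) ℝ) : 0 ≤ nuclearNorm B :=
  Finset.sum_nonneg fun _ _ => Real.sqrt_nonneg _

lemma abs_finner_le_specNorm_mul_nuclearNorm (W B : Matrix (Fin m) (Fin k) ℝ) :
    |finner W B| ≤ specNorm W * nuclearNorm B := by
  rw [finner_eq_sum_inner (rightSingularBasis B), nuclearNorm_eq_sum, Finset.mul_sum]
  refine (Finset.abs_sum_le_sum_abs _ _).trans (Finset.sum_le_sum fun j _ => ?_)
  calc _ ≤ ‖toEuclideanLin W (rightSingularBasis B j)‖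
        * ‖toEuclideanLin B (rightSingularBasis B j)‖ := abs_real_inner_le_norm _ _
    _ ≤ specNorm W * √(sqSingularValue B j) := by
      rw [norm_toEuclideanLin_rightSingularBasis]
      gcongr
      simpa using norm_toEuclideanLin_le W (rightSingularBasis B j)

lemma frobNorm_le_nuclearNorm (B : Matrix (Fin m) (Fin k) ℝ) : frobNorm B ≤ nuclearNorm B := by
  rw [← sq_le_sq₀ (frobNorm_nonneg B) (nuclearNorm_nonneg B), frobNorm_sq_eq_sum_sqSingularValue,
    nuclearNorm_eq_sum]
  calc ∑ j, sqSingularValue B j = ∑ j, √(sqSingularValue B j) ^ 2 := by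
        simp only [Real.sq_sqrt (sqSingularValue_nonneg B _)]
    _ ≤ (∑ j, √(sqSingularValue B j)) ^ 2 :=
        Finset.sum_sq_le_sq_sum_of_nonneg fun _ _ => Real.sqrt_nonneg _

lemma nuclearNorm_le_sqrt_mul_frobNorm (B : Matrix (Fin m) (Fin k) ℝ) :
    nuclearNorm B ≤ √k * frobNorm B := by
  rw [← sq_le_sq₀ (nuclearNorm_nonneg B) (mul_nonneg (Real.sqrt_nonneg _) (frobNorm_nonneg B)),
    mul_pow, Real.sq_sqrt (by positivity),
    frobNorm_sq_eq_sum_sqSingularValue, nuclearNorm_eq_sum]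
  calc (∑ j, √(sqSingularValue B j)) ^ 2 ≤ k * ∑ j, √(sqSingularValue B j) ^ 2 := by
        simpa using sq_sum_le_card_mul_sum_sq (s := Finset.univ)
          (f := fun j => √(sqSingularValue B j))
    _ = k * ∑ j, sqSingularValue B j := by
        simp only [Real.sq_sqrt (sqSingularValue_nonneg B _)]

end NuclearNorm

section PolarFactor

variable {m k : ℕ}

-- The terms with a zero singular value vanish because `(√0)⁻¹ = 0`.
noncomputable def polarFactor (B : Matrix (Fin m) (Fin k) ℝ) : Matrix (Fin m) (Fin k) ℝ :=
  ∑ j, (√(sqSingularValue B j))⁻¹ •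
    vecMulVec ⇑(toEuclideanLin B (rightSingularBasis B j)) ⇑(rightSingularBasis B j)

lemma toEuclideanLin_polarFactor_apply (B : Matrix (Fin m) (Fin k) ℝ)
    (x : EuclideanSpace ℝ (Fin k)) :
    toEuclideanLin (polarFactor B) x = ∑ j, ((√(sqSingularValue B j))⁻¹ *
      ⟪rightSingularBasis B j, x⟫_ℝ) • toEuclideanLin B (rightSingularBasis B j) := by
  simp only [polarFactor, map_sum, map_smul, LinearMap.sum_apply, LinearMap.smul_apply,
    toEuclideanLin_vecMulVec, smul_smul]

lemma norm_toEuclideanLin_polarFactor_le (B : Matrix (Fin m) (Fin k) ℝ)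
    (x : EuclideanSpace ℝ (Fin k)) : ‖toEuclideanLin (polarFactor B) x‖ ≤ ‖x‖ := by
  set v := rightSingularBasis B
  set c : Fin k → ℝ := fun j => (√(sqSingularValue B j))⁻¹ * ⟪v j, x⟫_ℝ
  have hsq : ‖toEuclideanLin (polarFactor B) x‖ ^ 2 = ∑ j, c j ^ 2 * sqSingularValue B j := by
    rw [toEuclideanLin_polarFactor_apply, ← real_inner_self_eq_norm_sq, sum_inner]
    simp only [inner_sum, real_inner_smul_left, real_inner_smul_right,
      inner_toEuclideanLin_rightSingularBasis, mul_ite, mul_zero, Finset.sum_ite_eq,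
      Finset.mem_univ, if_true]
    exact Finset.sum_congr rfl fun j _ => by ring
  have hterm : ∀ j, c j ^ 2 * sqSingularValue B j ≤ ‖⟪v j, x⟫_ℝ‖ ^ 2 := by
    intro j
    have hs := sqSingularValue_nonneg B j
    rw [Real.norm_eq_abs, sq_abs]
    calc c j ^ 2 * sqSingularValue B j
        = ⟪v j, x⟫_ℝ ^ 2 * ((sqSingularValue B j)⁻¹ * sqSingularValue B j) := by
          simp only [c, mul_pow, inv_pow, Real.sq_sqrt hs]; ring
      _ ≤ ⟪v j, x⟫_ℝ ^ 2 * 1 := by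
          gcongr
          rcases hs.eq_or_lt with h | h
          · simp [← h]
          · rw [inv_mul_cancel₀ h.ne']
      _ = _ := mul_one _
  rw [← sq_le_sq₀ (norm_nonneg _) (norm_nonneg _), hsq, ← v.sum_sq_norm_inner_right x]
  exact Finset.sum_le_sum fun j _ => hterm j

lemma specNorm_polarFactor_le_one (B : Matrix (Fin m) (Fin k) ℝ) :
    specNorm (polarFactor B) ≤ 1 :=
  specNorm_le_of_norm_le zero_le_one fun x => by
    simpa using norm_toEuclideanLin_polarFactor_le B x

lemma finner_polarFactor_self (B : Matrix (Fin m) (Fin k) ℝ) :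
    finner (polarFactor B) B = nuclearNorm B := by
  simp only [polarFactor, finner_sum_left, finner_smul_left, finner_vecMulVec,
    real_inner_self_eq_norm_sq, norm_sq_toEuclideanLin_rightSingularBasis, nuclearNorm_eq_sum]
  refine Finset.sum_congr rfl fun j _ => ?_
  have hs := sqSingularValue_nonneg B j
  rcases hs.eq_or_lt with h | h
  · simp [← h]
  · rw [← Real.sq_sqrt hs, Real.sqrt_sq (Real.sqrt_nonneg _), sq,
      inv_mul_cancel_left₀ (Real.sqrt_pos.2 h).ne']

lemma mul_polarFactor_eq_zero {p : ℕ} {M : Matrix (Fin p) (Fin m) ℝ} {B : Matrix (Fin m) (Fin k) ℝ}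
    (h : M * B = 0) : M * polarFactor B = 0 := by
  simp only [polarFactor, Matrix.mul_sum, Matrix.mul_smul, mul_vecMulVec_euclidean,
    ← toEuclideanLin_mul_apply, h, map_zero, LinearMap.zero_apply]
  simp

lemma polarFactor_mul_eq_zero {p : ℕ} {B : Matrix (Fin m) (Fin k) ℝ} {V : Matrix (Fin k) (Fin p) ℝ}
    (h : B * V = 0) : polarFactor B * V = 0 := by
  simp only [polarFactor, Matrix.sum_mul, Matrix.smul_mul, vecMulVec_mul_euclidean]
  refine Finset.sum_eq_zero fun j _ => ?_
  rcases (sqSingularValue_nonneg B j).eq_or_lt with hs | hs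
  · simp [← hs]
  · have hv : rightSingularBasis B j = (sqSingularValue B j)⁻¹ •
        toEuclideanLin (Bᵀ * B) (rightSingularBasis B j) := by
      rw [toEuclideanLin_gram_rightSingularBasis, smul_smul, inv_mul_cancel₀ hs.ne', one_smul]
    have hVt : Vᵀ * (Bᵀ * B) = 0 := by
      rw [← Matrix.mul_assoc, ← transpose_mul, h, transpose_zero, Matrix.zero_mul]
    have hVv : toEuclideanLin Vᵀ (rightSingularBasis B j) = 0 := by
      rw [hv, map_smul, ← toEuclideanLin_mul_apply, hVt]
      simp
    ext i l
    simp [hVv, vecMulVec_apply]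

lemma nuclearNorm_sub_le (A C : Matrix (Fin m) (Fin k) ℝ) :
    nuclearNorm (A - C) ≤ nuclearNorm A + nuclearNorm C := by
  have hZ := specNorm_polarFactor_le_one (A - C)
  have hA := abs_finner_le_specNorm_mul_nuclearNorm (polarFactor (A - C)) A
  have hC := abs_finner_le_specNorm_mul_nuclearNorm (polarFactor (A - C)) C
  rw [← finner_polarFactor_self, finner_sub_right]
  linarith [abs_le.1 (hA.trans (mul_le_of_le_one_left (nuclearNorm_nonneg A) hZ)),
    abs_le.1 (hC.trans (mul_le_of_le_one_left (nuclearNorm_nonneg C) hZ))]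

end PolarFactor

section TangentSpace

variable {n r : ℕ} {U V : Matrix (Fin n) (Fin r) ℝ}
  {PT : Matrix (Fin n) (Fin n) ℝ →ₗ[ℝ] Matrix (Fin n) (Fin n) ℝ}

lemma Tspace_neg_left : Tspace (-U) V = Tspace U V := by
  ext X
  constructor
  · rintro ⟨Q, R, rfl⟩
    exact ⟨-Q, R, by simp⟩
  · rintro ⟨Q, R, rfl⟩
    exact ⟨-Q, R, by simp⟩

lemma mul_diagonal_mul_transpose_mem_Tspace (σ : Fin r → ℝ) :
    U * diagonal σ * Vᵀ ∈ Tspace U V :=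
  ⟨V * diagonal σ, 0, by simp [transpose_mul, Matrix.mul_assoc]⟩

lemma finner_eq_zero_of_mem_Tspace {Z Y : Matrix (Fin n) (Fin n) ℝ} (hUZ : Uᵀ * Z = 0)
    (hZV : Z * V = 0) (hY : Y ∈ Tspace U V) : finner Z Y = 0 := by
  obtain ⟨Q, R, rfl⟩ := hY
  rw [finner_add_right, finner_mul_left, finner_mul_right, transpose_transpose, hUZ, hZV,
    finner_zero_left, finner_zero_left, add_zero]

namespace IsOrthProjOnto

lemma transpose_mul_sub_eq_zero (hPT : IsOrthProjOnto PT (Tspace U V))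
    (X : Matrix (Fin n) (Fin n) ℝ) : Uᵀ * (X - PT X) = 0 := by
  have h := hPT.2.2 X (U * (Uᵀ * (X - PT X))) ⟨(Uᵀ * (X - PT X))ᵀ, 0, by simp⟩
  rw [finner_mul_left] at h
  exact eq_zero_of_finner_self_eq_zero h

lemma sub_mul_eq_zero (hPT : IsOrthProjOnto PT (Tspace U V)) (X : Matrix (Fin n) (Fin n) ℝ) :
    (X - PT X) * V = 0 := by
  have h := hPT.2.2 X ((X - PT X) * V * Vᵀ) ⟨0, (X - PT X) * V, by simp⟩
  rw [finner_mul_right, transpose_transpose] at h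
  exact eq_zero_of_finner_self_eq_zero h

lemma finner_sub_self_eq (hPT : IsOrthProjOnto PT (Tspace U V))
    {Z : Matrix (Fin n) (Fin n) ℝ} (hUZ : Uᵀ * Z = 0) (hZV : Z * V = 0)
    (X : Matrix (Fin n) (Fin n) ℝ) : finner Z (X - PT X) = finner Z X := by
  rw [finner_sub_right, finner_eq_zero_of_mem_Tspace hUZ hZV (hPT.1 X), sub_zero]

end IsOrthProjOnto

lemma specNorm_mul_transpose_add_le_one {Z : Matrix (Fin n) (Fin n) ℝ} (hU : Uᵀ * U = 1)
    (hV : Vᵀ * V = 1) (hUZ : Uᵀ * Z = 0) (hZV : Z * V = 0) (hZ : specNorm Z ≤ 1) :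
    specNorm (U * Vᵀ + Z) ≤ 1 := by
  refine specNorm_le_of_norm_le zero_le_one fun x => ?_
  set y := toEuclideanLin Vᵀ x
  have hcross : ⟪toEuclideanLin U y, toEuclideanLin Z x⟫_ℝ = 0 := by
    rw [inner_toEuclideanLin_left, ← toEuclideanLin_mul_apply, hUZ]
    simp
  have hZx : toEuclideanLin Z x = toEuclideanLin Z (x - toEuclideanLin V y) := by
    rw [map_sub, ← toEuclideanLin_mul_apply, hZV]
    simp
  have hproj : ‖x - toEuclideanLin V y‖ ^ 2 = ‖x‖ ^ 2 - ‖y‖ ^ 2 := by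
    rw [norm_sub_sq_real, norm_toEuclideanLin_of_transpose_mul_self_eq_one hV, real_inner_comm,
      inner_toEuclideanLin_left, real_inner_self_eq_norm_sq]
    ring
  have hZbound : ‖toEuclideanLin Z x‖ ^ 2 ≤ ‖x‖ ^ 2 - ‖y‖ ^ 2 := by
    rw [← hproj, hZx]
    gcongr
    exact (norm_toEuclideanLin_le Z _).trans (mul_le_of_le_one_left (norm_nonneg _) hZ)
  rw [one_mul, ← sq_le_sq₀ (norm_nonneg _) (norm_nonneg _), map_add, LinearMap.add_apply,
    toEuclideanLin_mul_apply, norm_add_sq_real, hcross,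
    norm_toEuclideanLin_of_transpose_mul_self_eq_one hU]
  linarith

/-- `U Vᵀ + polarFactor (X - PT X)` has spectral norm at most one and pairs with `X` to the
left-hand side. -/
lemma finner_add_nuclearNorm_sub_le (hU : Uᵀ * U = 1) (hV : Vᵀ * V = 1)
    (hPT : IsOrthProjOnto PT (Tspace U V)) (X : Matrix (Fin n) (Fin n) ℝ) :
    finner (U * Vᵀ) X + nuclearNorm (X - PT X) ≤ nuclearNorm X := by
  set Z := polarFactor (X - PT X)
  have hUZ : Uᵀ * Z = 0 := mul_polarFactor_eq_zero (hPT.transpose_mul_sub_eq_zero X)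
  have hZV : Z * V = 0 := polarFactor_mul_eq_zero (hPT.sub_mul_eq_zero X)
  have hspec := specNorm_mul_transpose_add_le_one hU hV hUZ hZV (specNorm_polarFactor_le_one _)
  have hdual := ((le_abs_self _).trans (abs_finner_le_specNorm_mul_nuclearNorm _ X)).trans
    (mul_le_of_le_one_left (nuclearNorm_nonneg X) hspec)
  rwa [finner_add_left, ← hPT.finner_sub_self_eq hUZ hZV, finner_polarFactor_self] at hdual

end TangentSpace

section SVD

variable {m k r : ℕ}

lemma finner_diagonal (A : Matrix (Fin r) (Fin r) ℝ) (σ : Fin r → ℝ) :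
    finner A (diagonal σ) = ∑ t, A t t * σ t := by
  simp [finner, diagonal_apply]

lemma finner_mul_diagonal_mul_transpose (Y : Matrix (Fin m) (Fin k) ℝ)
    (U : Matrix (Fin m) (Fin r) ℝ) (V : Matrix (Fin k) (Fin r) ℝ) (σ : Fin r → ℝ) :
    finner Y (U * diagonal σ * Vᵀ) = finner (Uᵀ * Y * V) (diagonal σ) := by
  rw [finner_mul_right, transpose_transpose, finner_mul_left, Matrix.mul_assoc]

lemma transpose_mul_mul_apply_self (Y : Matrix (Fin m) (Fin k) ℝ) (U : Matrix (Fin m) (Fin r) ℝ)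
    (V : Matrix (Fin k) (Fin r) ℝ) (t : Fin r) :
    (Uᵀ * Y * V) t t = ⟪toEuclideanLin U (EuclideanSpace.single t 1),
      toEuclideanLin Y (toEuclideanLin V (EuclideanSpace.single t 1))⟫_ℝ := by
  rw [inner_toEuclideanLin_left, ← toEuclideanLin_mul_apply, ← toEuclideanLin_mul_apply,
    EuclideanSpace.inner_single_left]
  simp only [toLpLin_apply, WithLp.ofLp_toLp, Matrix.mul_assoc]
  simp [mul_apply, mulVec, dotProduct]

lemma finner_mul_diagonal_mul_transpose_le {Y : Matrix (Fin m) (Fin k) ℝ}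
    {U : Matrix (Fin m) (Fin r) ℝ} {V : Matrix (Fin k) (Fin r) ℝ} {σ : Fin r → ℝ}
    (hU : Uᵀ * U = 1) (hV : Vᵀ * V = 1) (hσ : ∀ t, 0 ≤ σ t) (hY : specNorm Y ≤ 1) :
    finner Y (U * diagonal σ * Vᵀ) ≤ ∑ t, σ t := by
  rw [finner_mul_diagonal_mul_transpose, finner_diagonal]
  refine Finset.sum_le_sum fun t _ => mul_le_of_le_one_left (hσ t) ?_
  rw [transpose_mul_mul_apply_self]
  refine (real_inner_le_norm _ _).trans ?_
  rw [norm_toEuclideanLin_of_transpose_mul_self_eq_one hU]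
  refine (mul_le_mul_of_nonneg_left (norm_toEuclideanLin_le Y _) (norm_nonneg _)).trans ?_
  simpa [norm_toEuclideanLin_of_transpose_mul_self_eq_one hV] using hY

lemma finner_mul_transpose_mul_diagonal_mul_transpose {U : Matrix (Fin m) (Fin r) ℝ}
    {V : Matrix (Fin k) (Fin r) ℝ} (hU : Uᵀ * U = 1) (hV : Vᵀ * V = 1) (σ : Fin r → ℝ) :
    finner (U * Vᵀ) (U * diagonal σ * Vᵀ) = ∑ t, σ t := by
  rw [finner_mul_diagonal_mul_transpose, ← Matrix.mul_assoc, hU, Matrix.one_mul, hV,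
    finner_diagonal]
  simp

lemma nuclearNorm_le_finner_of_svd {U : Matrix (Fin m) (Fin r) ℝ} {V : Matrix (Fin k) (Fin r) ℝ}
    {σ : Fin r → ℝ} (hU : Uᵀ * U = 1) (hV : Vᵀ * V = 1) (hσ : ∀ t, 0 ≤ σ t) :
    nuclearNorm (U * diagonal σ * Vᵀ) ≤ finner (U * Vᵀ) (U * diagonal σ * Vᵀ) := by
  rw [← finner_polarFactor_self, finner_mul_transpose_mul_diagonal_mul_transpose hU hV]
  exact finner_mul_diagonal_mul_transpose_le hU hV hσ (specNorm_polarFactor_le_one _)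

end SVD

section EntrywiseNorms

variable {m k : ℕ}

lemma l1Norm_eq_sum_abs_frobVec (A : Matrix (Fin m) (Fin k) ℝ) :
    l1Norm A = ∑ p, |frobVec A p| := by
  simp [l1Norm, Fintype.sum_prod_type]

lemma frobNorm_sq_eq_sum_frobVec (A : Matrix (Fin m) (Fin k) ℝ) :
    frobNorm A ^ 2 = ∑ p, |frobVec A p| ^ 2 := by
  simp [frobNorm_eq_norm, EuclideanSpace.norm_sq_eq]

lemma l1Norm_nonneg (A : Matrix (Fin m) (Fin k) ℝ) : 0 ≤ l1Norm A :=
  Finset.sum_nonneg fun _ _ => Finset.sum_nonneg fun _ _ => abs_nonneg _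

lemma l1Norm_sub_le (A B : Matrix (Fin m) (Fin k) ℝ) :
    l1Norm (A - B) ≤ l1Norm A + l1Norm B := by
  simp only [l1Norm, ← Finset.sum_add_distrib]
  exact Finset.sum_le_sum fun i _ => Finset.sum_le_sum fun j _ => abs_sub _ _

lemma frobNorm_le_l1Norm (A : Matrix (Fin m) (Fin k) ℝ) : frobNorm A ≤ l1Norm A := by
  rw [← sq_le_sq₀ (frobNorm_nonneg A) (l1Norm_nonneg A), frobNorm_sq_eq_sum_frobVec,
    l1Norm_eq_sum_abs_frobVec]
  exact Finset.sum_sq_le_sq_sum_of_nonneg fun _ _ => abs_nonneg _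

lemma l1Norm_le_sqrt_mul_frobNorm (A : Matrix (Fin m) (Fin k) ℝ) :
    l1Norm A ≤ √(m * k) * frobNorm A := by
  rw [← sq_le_sq₀ (l1Norm_nonneg A) (mul_nonneg (Real.sqrt_nonneg _) (frobNorm_nonneg A)),
    mul_pow, Real.sq_sqrt (by positivity), frobNorm_sq_eq_sum_frobVec, l1Norm_eq_sum_abs_frobVec]
  simpa using sq_sum_le_card_mul_sum_sq (s := Finset.univ) (f := fun p => |frobVec A p|)

lemma abs_le_linfNorm (A : Matrix (Fin m) (Fin k) ℝ) (i : Fin m) (j : Fin k) :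
    |A i j| ≤ linfNorm A :=
  (le_ciSup (Set.finite_range _).bddAbove j).trans
    (le_ciSup (f := fun i => ⨆ j, |A i j|) (Set.finite_range _).bddAbove i)

lemma abs_finner_le_mul_l1Norm {A : Matrix (Fin m) (Fin k) ℝ} {c : ℝ} (hA : ∀ i j, |A i j| ≤ c)
    (B : Matrix (Fin m) (Fin k) ℝ) : |finner A B| ≤ c * l1Norm B := by
  simp only [finner, l1Norm, Finset.mul_sum]
  refine (Finset.abs_sum_le_sum_abs _ _).trans (Finset.sum_le_sum fun i _ => ?_)
  refine (Finset.abs_sum_le_sum_abs _ _).trans (Finset.sum_le_sum fun j _ => ?_)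
  rw [abs_mul]
  exact mul_le_mul_of_nonneg_right (hA i j) (abs_nonneg _)

end EntrywiseNorms

section SupportProjection

variable {n : ℕ}

lemma projSet_apply (Ω : Set (Fin n × Fin n)) (A : Matrix (Fin n) (Fin n) ℝ) (i j : Fin n) :
    projSet Ω A i j = if (i, j) ∈ Ω then A i j else 0 :=
  Set.indicator_apply _ _ _

lemma projSet_sub (Ω : Set (Fin n × Fin n)) (A B : Matrix (Fin n) (Fin n) ℝ) :
    projSet Ω (A - B) = projSet Ω A - projSet Ω B := by
  ext i j
  simp only [projSet_apply, Matrix.sub_apply]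
  split_ifs <;> simp

lemma projSet_neg (Ω : Set (Fin n × Fin n)) (A : Matrix (Fin n) (Fin n) ℝ) :
    projSet Ω (-A) = -projSet Ω A := by
  ext i j
  simp only [projSet_apply, Matrix.neg_apply]
  split_ifs <;> simp

lemma frobNorm_projSet_le (Ω : Set (Fin n × Fin n)) (A : Matrix (Fin n) (Fin n) ℝ) :
    frobNorm (projSet Ω A) ≤ frobNorm A := by
  simp only [frobNorm]
  refine Real.sqrt_le_sqrt (Finset.sum_le_sum fun i _ => Finset.sum_le_sum fun j _ => ?_)
  rw [projSet_apply]
  split_ifs <;> simp [sq_nonneg]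

lemma finner_eq_finner_projSet_add (Ω : Set (Fin n × Fin n)) (A B : Matrix (Fin n) (Fin n) ℝ) :
    finner A B = finner (projSet Ω A) (projSet Ω B) +
      finner (A - projSet Ω A) (B - projSet Ω B) := by
  simp only [finner, ← Finset.sum_add_distrib, Matrix.sub_apply, projSet_apply]
  refine Finset.sum_congr rfl fun i _ => Finset.sum_congr rfl fun j _ => ?_
  split_ifs <;> ring

lemma sub_projSet_suppSet_apply (S A : Matrix (Fin n) (Fin n) ℝ) (i j : Fin n) :
    (A - projSet (suppSet S) A) i j = if S i j = 0 then A i j else 0 := by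
  rw [Matrix.sub_apply, projSet_apply]
  by_cases h : S i j = 0 <;> simp [suppSet, h]

lemma abs_finner_le_projSet (Ω : Set (Fin n × Fin n)) (D Q : Matrix (Fin n) (Fin n) ℝ) :
    |finner D Q| ≤ frobNorm (projSet Ω D) * frobNorm (projSet Ω Q) +
      linfNorm (D - projSet Ω D) * l1Norm (Q - projSet Ω Q) := by
  rw [finner_eq_finner_projSet_add Ω]
  exact (abs_add_le _ _).trans (add_le_add (abs_finner_le _ _)
    (abs_finner_le_mul_l1Norm (abs_le_linfNorm _) _))

lemma sub_smul_sgnMat_sub_projSet_suppSet (S X : Matrix (Fin n) (Fin n) ℝ) (c : ℝ) :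
    X - c • sgnMat S - projSet (suppSet S) (X - c • sgnMat S) = X - projSet (suppSet S) X := by
  ext i j
  simp only [sub_projSet_suppSet_apply]
  split_ifs with h <;> simp [sgnMat, h]

lemma abs_add_sign_mul_le (s h : ℝ) :
    |s| + Real.sign s * h + |if s = 0 then h else 0| ≤ |s + h| := by
  rcases lt_trichotomy s 0 with hs | rfl | hs
  · rw [Real.sign_of_neg hs, if_neg hs.ne, abs_zero, abs_of_neg hs]
    linarith [neg_abs_le (s + h)]
  · simp
  · rw [Real.sign_of_pos hs, if_neg hs.ne', abs_zero, abs_of_pos hs]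
    linarith [le_abs_self (s + h)]

lemma neg_sign_mul_add_le (s x : ℝ) :
    -(Real.sign s * x) + |if s = 0 then x else 0| ≤ |x| := by
  rcases lt_trichotomy s 0 with hs | rfl | hs
  · rw [Real.sign_of_neg hs, if_neg hs.ne, abs_zero]
    linarith [le_abs_self x]
  · simp
  · rw [Real.sign_of_pos hs, if_neg hs.ne', abs_zero]
    linarith [neg_abs_le x]

lemma l1Norm_add_ge (S H : Matrix (Fin n) (Fin n) ℝ) :
    l1Norm S + finner (sgnMat S) H + l1Norm (H - projSet (suppSet S) H) ≤ l1Norm (S + H) := by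
  simp only [l1Norm, finner, sub_projSet_suppSet_apply, ← Finset.sum_add_distrib]
  exact Finset.sum_le_sum fun i _ => Finset.sum_le_sum fun j _ => abs_add_sign_mul_le _ _

lemma neg_finner_sgnMat_add_l1Norm_le (S X : Matrix (Fin n) (Fin n) ℝ) :
    -finner (sgnMat S) X + l1Norm (X - projSet (suppSet S) X) ≤ l1Norm X := by
  simp only [l1Norm, finner, sub_projSet_suppSet_apply, ← Finset.sum_neg_distrib,
    ← Finset.sum_add_distrib]
  exact Finset.sum_le_sum fun i _ => Finset.sum_le_sum fun j _ => neg_sign_mul_add_le _ _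

end SupportProjection

section RobustPCA

variable {n r : ℕ} {U V : Matrix (Fin n) (Fin r) ℝ}
  {PT : Matrix (Fin n) (Fin n) ℝ →ₗ[ℝ] Matrix (Fin n) (Fin n) ℝ}

lemma nuclearNorm_add_ge_of_svd {σ : Fin r → ℝ} (hU : Uᵀ * U = 1) (hV : Vᵀ * V = 1)
    (hσ : ∀ t, 0 ≤ σ t) (hPT : IsOrthProjOnto PT (Tspace U V))
    (H : Matrix (Fin n) (Fin n) ℝ) :
    nuclearNorm (U * diagonal σ * Vᵀ) + finner (U * Vᵀ) H + nuclearNorm (H - PT H) ≤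
      nuclearNorm (U * diagonal σ * Vᵀ + H) := by
  have hL := nuclearNorm_le_finner_of_svd hU hV hσ
  have hsub := finner_add_nuclearNorm_sub_le hU hV hPT (U * diagonal σ * Vᵀ + H)
  rw [map_add, hPT.2.1 _ (mul_diagonal_mul_transpose_mem_Tspace σ), finner_add_right,
    add_sub_add_left_eq_sub] at hsub
  linarith

lemma nuclearNorm_compl_add_finner_le (hU : Uᵀ * U = 1) (hV : Vᵀ * V = 1)
    (hPT : IsOrthProjOnto PT (Tspace U V)) (M Q : Matrix (Fin n) (Fin n) ℝ) :
    nuclearNorm (Q - PT Q) + finner (U * Vᵀ) Q ≤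
      nuclearNorm (M + Q - PT (M + Q)) + finner (U * Vᵀ) (M + Q) + √n * frobNorm M := by
  have hsplit : Q - PT Q = (M + Q - PT (M + Q)) - (M - PT M) := by rw [map_add]; abel
  have htri := nuclearNorm_sub_le (M + Q - PT (M + Q)) (M - PT M)
  have hneg := finner_add_nuclearNorm_sub_le (U := -U) (by simpa using hU) hV
    (by rwa [Tspace_neg_left]) M
  rw [Matrix.neg_mul, finner_neg_left] at hneg
  rw [hsplit, finner_add_right]
  linarith [nuclearNorm_le_sqrt_mul_frobNorm M]

lemma l1Norm_compl_sub_finner_le (S M Q : Matrix (Fin n) (Fin n) ℝ) :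
    l1Norm (Q - projSet (suppSet S) Q) - finner (sgnMat S) Q ≤
      l1Norm (M - Q - projSet (suppSet S) (M - Q)) + finner (sgnMat S) (M - Q) +
        n * frobNorm M := by
  have hsplit : Q - projSet (suppSet S) Q =
      (M - projSet (suppSet S) M) - (M - Q - projSet (suppSet S) (M - Q)) := by
    rw [projSet_sub]; abel
  have htri := l1Norm_sub_le (M - projSet (suppSet S) M) (M - Q - projSet (suppSet S) (M - Q))
  have hl1 := l1Norm_le_sqrt_mul_frobNorm M
  rw [Real.sqrt_mul_self (Nat.cast_nonneg n)] at hl1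
  rw [hsplit, finner_sub_right]
  linarith [neg_finner_sgnMat_add_l1Norm_le S M]

lemma finner_le_specNorm_mul_nuclearNorm_compl (hPT : IsOrthProjOnto PT (Tspace U V))
    {W : Matrix (Fin n) (Fin n) ℝ} (hW : PT W = 0) (Q : Matrix (Fin n) (Fin n) ℝ) :
    finner W Q ≤ specNorm W * nuclearNorm (Q - PT Q) := by
  have horth := hPT.2.2 W (PT Q) (hPT.1 Q)
  rw [hW, sub_zero] at horth
  rw [← sub_zero (finner W Q), ← horth, ← finner_sub_right]
  exact (le_abs_self _).trans (abs_finner_le_specNorm_mul_nuclearNorm _ _)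

lemma frobNorm_projSet_le_of_opNorm_le_half {Ω : Set (Fin n × Fin n)}
    (hop : ∀ X, frobNorm (projSet Ω (PT X)) ≤ 1 / 2 * frobNorm X) (Q : Matrix (Fin n) (Fin n) ℝ) :
    frobNorm (projSet Ω Q) ≤ 2 * frobNorm (Q - PT Q) + frobNorm (Q - projSet Ω Q) := by
  have h1 : frobNorm (projSet Ω Q) ≤ frobNorm (projSet Ω (PT Q)) + frobNorm (Q - PT Q) := by
    have hP := frobNorm_projSet_le Ω (Q - PT Q)
    have htri := frobNorm_add_le (projSet Ω (PT Q)) (projSet Ω Q - projSet Ω (PT Q))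
    rw [projSet_sub] at hP
    rw [add_sub_cancel] at htri
    linarith
  have h2 := frobNorm_add_le (projSet Ω Q) (Q - projSet Ω Q)
  rw [add_sub_cancel] at h2
  linarith [hop Q]

lemma nuclearNorm_add_l1Norm_compl_add_finner_le {σ : Fin r → ℝ}
    {S0 M Q : Matrix (Fin n) (Fin n) ℝ} {lam : ℝ}
    (hU : Uᵀ * U = 1) (hV : Vᵀ * V = 1) (hσ : ∀ t, 0 ≤ σ t)
    (hPT : IsOrthProjOnto PT (Tspace U V)) (hlam : 0 ≤ lam)
    (hH : nuclearNorm (U * diagonal σ * Vᵀ + (M + Q)) + lam * l1Norm (S0 + (M - Q)) ≤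
      nuclearNorm (U * diagonal σ * Vᵀ) + lam * l1Norm S0) :
    nuclearNorm (Q - PT Q) + lam * l1Norm (Q - projSet (suppSet S0) Q) +
        finner (U * Vᵀ - lam • sgnMat S0) Q ≤ (√n + lam * n) * frobNorm M := by
  have hnuc := nuclearNorm_add_ge_of_svd hU hV hσ hPT (M + Q)
  have hl1 := mul_le_mul_of_nonneg_left (l1Norm_add_ge S0 (M - Q)) hlam
  have hN := nuclearNorm_compl_add_finner_le hU hV hPT M Q
  have hL := mul_le_mul_of_nonneg_left (l1Norm_compl_sub_finner_le S0 M Q) hlam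
  rw [finner_sub_left, finner_smul_left]
  linarith

lemma abs_finner_certificate_le {S0 W : Matrix (Fin n) (Fin n) ℝ} {lam : ℝ}
    (hW3 : frobNorm (projSet (suppSet S0) (U * Vᵀ - lam • sgnMat S0 + W)) ≤ lam / 4)
    (hW4 : linfNorm ((U * Vᵀ + W) - projSet (suppSet S0) (U * Vᵀ + W)) < lam / 2)
    (Q : Matrix (Fin n) (Fin n) ℝ) :
    |finner (U * Vᵀ - lam • sgnMat S0 + W) Q| ≤
      lam / 4 * frobNorm (projSet (suppSet S0) Q) +
        lam / 2 * l1Norm (Q - projSet (suppSet S0) Q) := by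
  refine (abs_finner_le_projSet (suppSet S0) _ Q).trans (add_le_add ?_ ?_)
  · exact mul_le_mul_of_nonneg_right hW3 (frobNorm_nonneg _)
  · rw [sub_add_eq_add_sub, sub_smul_sgnMat_sub_projSet_suppSet]
    exact mul_le_mul_of_nonneg_right hW4.le (l1Norm_nonneg _)

lemma inv_sqrt_le_half {n : ℕ} (hn : 4 ≤ n) : (√n)⁻¹ ≤ 1 / 2 := by
  rw [one_div]
  refine inv_anti₀ two_pos ?_
  rw [show (2 : ℝ) = √4 by rw [show (4 : ℝ) = 2 ^ 2 by norm_num, Real.sqrt_sq zero_le_two]]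
  exact Real.sqrt_le_sqrt (by exact_mod_cast hn)

lemma frobNorm_compl_add_le {σ : Fin r → ℝ} {S0 W M Q : Matrix (Fin n) (Fin n) ℝ} {lam : ℝ}
    (hn : 4 ≤ n) (hU : Uᵀ * U = 1) (hV : Vᵀ * V = 1) (hσ : ∀ t, 0 ≤ σ t)
    (hPT : IsOrthProjOnto PT (Tspace U V)) (hlam : lam = (√n)⁻¹)
    (hop : ∀ X, frobNorm (projSet (suppSet S0) (PT X)) ≤ 1 / 2 * frobNorm X)
    (hW1 : PT W = 0) (hW2 : specNorm W < 1 / 2)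
    (hW3 : frobNorm (projSet (suppSet S0) (U * Vᵀ - lam • sgnMat S0 + W)) ≤ lam / 4)
    (hW4 : linfNorm ((U * Vᵀ + W) - projSet (suppSet S0) (U * Vᵀ + W)) < lam / 2)
    (hH : nuclearNorm (U * diagonal σ * Vᵀ + (M + Q)) + lam * l1Norm (S0 + (M - Q)) ≤
      nuclearNorm (U * diagonal σ * Vᵀ) + lam * l1Norm S0) :
    frobNorm (Q - PT Q) + frobNorm (Q - projSet (suppSet S0) Q) ≤ 8 * n * frobNorm M := by
  have hn0 : (0 : ℝ) < n := by exact_mod_cast (show 0 < n by omega)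
  have hlam_pos : 0 < lam := by rw [hlam]; positivity
  have hlam_half : lam ≤ 1 / 2 := hlam ▸ inv_sqrt_le_half hn
  have hlam_sqrt : lam * √n = 1 := by rw [hlam]; exact inv_mul_cancel₀ (by positivity)
  have hlam_n : lam * n = √n := by
    rw [← Real.mul_self_sqrt hn0.le, ← mul_assoc, hlam_sqrt, one_mul, Real.mul_self_sqrt hn0.le]
  have hcone := nuclearNorm_add_l1Norm_compl_add_finner_le hU hV hσ hPT hlam_pos.le hH
  have hsplit : finner (U * Vᵀ - lam • sgnMat S0) Q =
      finner (U * Vᵀ - lam • sgnMat S0 + W) Q - finner W Q := by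
    rw [finner_add_left]; ring
  rw [hsplit, hlam_n] at hcone
  have hD := neg_le_abs (finner (U * Vᵀ - lam • sgnMat S0 + W) Q) |>.trans
    (abs_finner_certificate_le hW3 hW4 Q)
  have hWQ := (finner_le_specNorm_mul_nuclearNorm_compl hPT hW1 Q).trans
    (mul_le_mul_of_nonneg_right hW2.le (nuclearNorm_nonneg _))
  have hPQ := mul_le_mul_of_nonneg_left (frobNorm_projSet_le_of_opNorm_le_half hop Q)
    hlam_pos.le
  have ha := mul_le_mul_of_nonneg_left (frobNorm_le_nuclearNorm (Q - PT Q)) hlam_pos.le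
  have hb := mul_le_mul_of_nonneg_left (frobNorm_le_l1Norm (Q - projSet (suppSet S0) Q))
    hlam_pos.le
  have hN := mul_le_mul_of_nonneg_right hlam_half (nuclearNorm_nonneg (Q - PT Q))
  have hkey : lam * (frobNorm (Q - PT Q) + frobNorm (Q - projSet (suppSet S0) Q)) ≤
      8 * √n * frobNorm M := by
    linarith [mul_nonneg hlam_pos.le (frobNorm_nonneg (Q - PT Q))]
  calc frobNorm (Q - PT Q) + frobNorm (Q - projSet (suppSet S0) Q)
      = √n * (lam * (frobNorm (Q - PT Q) + frobNorm (Q - projSet (suppSet S0) Q))) := by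
        rw [← mul_assoc, mul_comm (√n), hlam_sqrt, one_mul]
    _ ≤ √n * (8 * √n * frobNorm M) := by gcongr
    _ = 8 * n * frobNorm M := by
        rw [show √n * (8 * √n * frobNorm M) = 8 * (√n * √n) * frobNorm M by ring,
          Real.mul_self_sqrt hn0.le]

end RobustPCA

theorem stmt8_general {n r : ℕ} (hn : 4 ≤ n) (L0 S0 : Matrix (Fin n) (Fin n) ℝ)
    (U V : Matrix (Fin n) (Fin r) ℝ) (σ : Fin r → ℝ)
    -- compact SVD of L₀
    (hU : Uᵀ * U = 1) (hV : Vᵀ * V = 1) (hσ : ∀ i, 0 < σ i)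
    (hSVD : L0 = U * Matrix.diagonal σ * Vᵀ)
    -- P_T is the orthogonal projection onto T
    (PT : Matrix (Fin n) (Fin n) ℝ →ₗ[ℝ] Matrix (Fin n) (Fin n) ℝ)
    (hPT : IsOrthProjOnto PT (Tspace U V))
    (lam : ℝ) (hlam : lam = (Real.sqrt n)⁻¹)
    -- ‖P_Ω P_T‖ ≤ 1/2
    (hop : ∀ X : Matrix (Fin n) (Fin n) ℝ,
      frobNorm (projSet (suppSet S0) (PT X)) ≤ (1 / 2) * frobNorm X)
    -- the dual certificate W
    (W : Matrix (Fin n) (Fin n) ℝ)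
    (hW1 : PT W = 0) (hW2 : specNorm W < 1 / 2)
    (hW3 : frobNorm (projSet (suppSet S0) (U * Vᵀ - lam • sgnMat S0 + W)) ≤ lam / 4)
    (hW4 : linfNorm ((U * Vᵀ + W) - projSet (suppSet S0) (U * Vᵀ + W)) < lam / 2)
    -- the pair H = (H_L, H_S)
    (δ : ℝ) (HL HS : Matrix (Fin n) (Fin n) ℝ)
    (hH : nuclearNorm (L0 + HL) + lam * l1Norm (S0 + HS) ≤
      nuclearNorm L0 + lam * l1Norm S0)
    (hHsum : frobNorm (HL + HS) ≤ 2 * δ)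
    -- H^Γ = P_Γ(H), H^{Γ⊥} = H − H^Γ
    (HΓ HΓp : Matrix (Fin n) (Fin n) ℝ × Matrix (Fin n) (Fin n) ℝ)
    (hHΓ : HΓ = projGamma (HL, HS)) (hHΓp : HΓp = (HL, HS) - HΓ) :
    pairFrob (HΓp.1 - PT HΓp.1, HΓp.2 - projSet (suppSet S0) HΓp.2) ≤
        frobNorm (HΓp.1 - PT HΓp.1) + frobNorm (HΓp.2 - projSet (suppSet S0) HΓp.2) ∧
      frobNorm (HΓp.1 - PT HΓp.1) + frobNorm (HΓp.2 - projSet (suppSet S0) HΓp.2) ≤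
        4 * Real.sqrt 2 * (n : ℝ) * pairFrob HΓ ∧
      4 * Real.sqrt 2 * (n : ℝ) * pairFrob HΓ ≤ 8 * (n : ℝ) * δ := by
  set M : Matrix (Fin n) (Fin n) ℝ := (1 / 2 : ℝ) • (HL + HS)
  set Q : Matrix (Fin n) (Fin n) ℝ := (1 / 2 : ℝ) • (HL - HS)
  have hHL : HL = M + Q := by module
  have hHS : HS = M - Q := by module
  have hΓ : HΓ = (M, M) := hHΓ
  have hΓp : HΓp = (Q, -Q) := by
    rw [hHΓp, hΓ, Prod.mk_sub_mk, Prod.mk.injEq]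
    constructor <;> module
  have hQ := frobNorm_compl_add_le hn hU hV (fun t => (hσ t).le) hPT hlam hop hW1 hW2 hW3 hW4
    (M := M) (Q := Q) (by rwa [← hHL, ← hHS, ← hSVD])
  have hM : frobNorm M ≤ δ := by
    rw [frobNorm_smul, abs_of_pos one_half_pos]
    linarith
  have hscale : 4 * √2 * (n : ℝ) * (√2 * frobNorm M) = 8 * n * frobNorm M := by
    rw [show 4 * √2 * (n : ℝ) * (√2 * frobNorm M) = 4 * (√2 * √2) * n * frobNorm M by ring,
      Real.mul_self_sqrt zero_le_two]
    ring
  rw [hΓp, hΓ, pairFrob_diag, hscale]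
  refine ⟨pairFrob_le_add _ _, ?_, by gcongr⟩
  dsimp only
  rwa [projSet_neg, ← neg_sub', frobNorm_neg]

/-- With λ = 1/√n, n ≥ 4, ‖P_Ω P_T‖ ≤ 1/2, a dual certificate, and H = (H_L, H_S) with
‖X₀ + H‖_♦ ≤ ‖X₀‖_♦ and ‖H_L + H_S‖_F ≤ 2δ, one has the chain of inequalities
‖(P_{T⊥} × P_{Ω⊥})(H^{Γ⊥})‖_F ≤ ‖P_{T⊥}(H^{Γ⊥}_L)‖_F + ‖P_{Ω⊥}(H^{Γ⊥}_S)‖_F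
  ≤ 4√2·n·‖H^Γ‖_F ≤ 8nδ. -/
theorem stmt8 {n r : ℕ} (hn : 4 ≤ n) (L0 S0 : Matrix (Fin n) (Fin n) ℝ)
    (U V : Matrix (Fin n) (Fin r) ℝ) (σ : Fin r → ℝ)
    -- compact SVD of L₀
    (hU : Uᵀ * U = 1) (hV : Vᵀ * V = 1) (hσ : ∀ i, 0 < σ i)
    (hSVD : L0 = U * Matrix.diagonal σ * Vᵀ) (hrank : L0.rank = r)
    -- P_T is the orthogonal projection onto T
    (PT : Matrix (Fin n) (Fin n) ℝ →ₗ[ℝ] Matrix (Fin n) (Fin n) ℝ)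
    (hPT : IsOrthProjOnto PT (Tspace U V))
    (lam : ℝ) (hlam : lam = (Real.sqrt n)⁻¹)
    -- ‖P_Ω P_T‖ ≤ 1/2
    (hop : ∀ X : Matrix (Fin n) (Fin n) ℝ,
      frobNorm (projSet (suppSet S0) (PT X)) ≤ (1 / 2) * frobNorm X)
    -- the dual certificate W
    (W : Matrix (Fin n) (Fin n) ℝ)
    (hW1 : PT W = 0) (hW2 : specNorm W < 1 / 2)
    (hW3 : frobNorm (projSet (suppSet S0) (U * Vᵀ - lam • sgnMat S0 + W)) ≤ lam / 4)
    (hW4 : linfNorm ((U * Vᵀ + W) - projSet (suppSet S0) (U * Vᵀ + W)) < lam / 2)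
    -- the pair H = (H_L, H_S)
    (δ : ℝ) (HL HS : Matrix (Fin n) (Fin n) ℝ)
    (hH : nuclearNorm (L0 + HL) + lam * l1Norm (S0 + HS) ≤
      nuclearNorm L0 + lam * l1Norm S0)
    (hHsum : frobNorm (HL + HS) ≤ 2 * δ)
    -- H^Γ = P_Γ(H), H^{Γ⊥} = H − H^Γ
    (HΓ HΓp : Matrix (Fin n) (Fin n) ℝ × Matrix (Fin n) (Fin n) ℝ)
    (hHΓ : HΓ = projGamma (HL, HS)) (hHΓp : HΓp = (HL, HS) - HΓ) :
    pairFrob (HΓp.1 - PT HΓp.1, HΓp.2 - projSet (suppSet S0) HΓp.2) ≤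
        frobNorm (HΓp.1 - PT HΓp.1) + frobNorm (HΓp.2 - projSet (suppSet S0) HΓp.2) ∧
      frobNorm (HΓp.1 - PT HΓp.1) + frobNorm (HΓp.2 - projSet (suppSet S0) HΓp.2) ≤
        4 * Real.sqrt 2 * (n : ℝ) * pairFrob HΓ ∧
      4 * Real.sqrt 2 * (n : ℝ) * pairFrob HΓ ≤ 8 * (n : ℝ) * δ :=
  stmt8_general hn L0 S0 U V σ hU hV hσ hSVD PT hPT lam hlam hop W hW1 hW2 hW3 hW4 δ HL HS hH hHsum
    HΓ HΓp hHΓ hHΓp
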